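/- Let S be a finitely generated semigroup. Then S has rational word problem if and only if S¹ (S with an identity adjoined) has rational word problem, and if and only if S⁰ (S with a zero adjoined) has rational word problem. -/

import Mathlib

/-- An asynchronous two-tape finite state automaton: in each step it reads at
most one symbol from each tape. -/
structure AsyncFSA (A : Type*) (B : Type*) where
  Q : Type
  [fin : Finite Q]
  init : Q
  accept : Set Q
  trans : Q → Option A → Option B → Q → Prop

namespace AsyncFSA

variable {A B : Type*}

/-- Computations of an asynchronous automaton. -/
inductive Reaches (M : AsyncFSA A B) : M.Q → List A → List B → M.Q → Prop
  | refl (q : M.Q) : Reaches M q [] [] q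
  | step {p q r : M.Q} {a : Option A} {b : Option B} {u : List A} {v : List B} :
      M.trans p a b q → Reaches M q u v r →
      Reaches M p (a.toList ++ u) (b.toList ++ v) r

/-- Acceptance of a pair of strings. -/
def Accepts (M : AsyncFSA A B) (u : List A) (v : List B) : Prop :=
  ∃ q ∈ M.accept, M.Reaches M.init u v q

end AsyncFSA

/-- A relation on strings is rational if it is decided by an asynchronous
two-tape finite state automaton. -/
def IsRationalRel {A B : Type*} (R : Set (List A × List B)) : Prop :=
  ∃ M : AsyncFSA A B, ∀ p : List A × List B, p ∈ R ↔ M.Accepts p.1 p.2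

/-- Pad a pair of strings to equal length, using `none` as padding symbol. -/
def padPair {A : Type*} (p : List A × List A) : List (Option A × Option A) :=
  List.zip (p.1.map some ++ List.replicate (p.2.length - p.1.length) none)
           (p.2.map some ++ List.replicate (p.1.length - p.2.length) none)

/-- A relation on strings is regular if a synchronous two-tape finite state
automaton (a finite automaton over the padded pair alphabet) accepts a padded
pair exactly when the pair is in the relation. -/
def IsRegularRel {A : Type*} (R : Set (List A × List A)) : Prop :=
  ∃ (Q : Type) (_ : Fintype Q) (M : DFA (Option A × Option A) Q),
    ∀ p : List A × List A, p ∈ R ↔ padPair p ∈ M.accepts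

/-- A language is regular if accepted by a finite state automaton. -/
def IsRegularLang {A : Type*} (L : Set (List A)) : Prop :=
  ∃ (Q : Type) (_ : Fintype Q) (M : DFA A Q), ∀ w, w ∈ L ↔ w ∈ M.accepts

/-- Evaluation of a word in a semigroup (`none` for the empty word). -/
def evalWord {α : Type*} {S : Type*} [Semigroup S] (f : α → S) : List α → Option S
  | [] => none
  | a :: l => some (List.foldl (fun s x => s * f x) (f a) l)

/-- The semigroup word problem with respect to a set `A` of elements:
pairs of nonempty strings over `A` representing the same element. -/
def SWP {S : Type*} [Semigroup S] (A : Set S) : Set (List ↥A × List ↥A) :=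
  {p | p.1 ≠ [] ∧ p.2 ≠ [] ∧
    evalWord Subtype.val p.1 = evalWord Subtype.val p.2}

/-- The monoid word problem with respect to a set `A` of elements. -/
def MWP {M : Type*} [Monoid M] (A : Set M) : Set (List ↥A × List ↥A) :=
  {p | (p.1.map Subtype.val).prod = (p.2.map Subtype.val).prod}

/-- A semigroup has rational word problem if it has a finite generating set
with rational word problem. -/
def HasRationalWP (S : Type*) [Semigroup S] : Prop :=
  ∃ A : Set S, A.Finite ∧ Subsemigroup.closure A = ⊤ ∧ IsRationalRel (SWP A)

/-!
Rational relations are closed under inverse images of letter maps that may erase letters, under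
images of letter-to-letter maps and under unions, and they contain every product of two regular
languages.

For `S¹` with generators `A ∪ {1}`, two nonempty words are equal in `S¹` exactly when the words
obtained by erasing the letter `1` are equal in `S` or are both empty. For `S⁰` with generators
`A ∪ {0}`, a word evaluates to `0` exactly when it contains the letter `0`; so two words are equal
in `S⁰` exactly when both contain `0`, or neither does and they are equal in `S`.

Conversely, in `S¹` and in `S⁰` a product lies in `S` only if both factors do or one factor is the
identity. Hence the generators lying in `S` generate `S`, and the word problem of `S` over them is
the inverse image of the word problem of `S¹` or `S⁰` under the inclusion of letters.
-/

theorem Option.toList_bind_eq_filterMap {α β : Type*} (g : α → Option β) (a : Option α) :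
    (a.bind g).toList = a.toList.filterMap g := by
  cases a with
  | none => rfl
  | some x => cases h : g x <;> simp [h]

namespace AsyncFSA

variable {C D C' D' : Type*}

theorem Reaches.append {M : AsyncFSA C D} {p q r : M.Q} {u u' : List C} {v v' : List D}
    (h : M.Reaches p u v q) (h' : M.Reaches q u' v' r) : M.Reaches p (u ++ u') (v ++ v') r := by
  induction h with
  | refl => exact h'
  | step ht _ ih => simpa only [List.append_assoc] using Reaches.step ht (ih h')

theorem Reaches.lift {M N : AsyncFSA C D} (e : M.Q → N.Q)
    (he : ∀ {p a b q}, M.trans p a b q → N.trans (e p) a b (e q))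
    {p q : M.Q} {u : List C} {v : List D} (h : M.Reaches p u v q) :
    N.Reaches (e p) u v (e q) := by
  induction h with
  | refl => exact .refl _
  | step ht _ ih => exact .step (he ht) ih

theorem Reaches.exists_of_lift {M N : AsyncFSA C D} (e : M.Q → N.Q)
    (he : ∀ {p a b t}, N.trans (e p) a b t → ∃ q, t = e q ∧ M.trans p a b q)
    {p : M.Q} {t : N.Q} {u : List C} {v : List D} (h : N.Reaches (e p) u v t) :
    ∃ q, t = e q ∧ M.Reaches p u v q := by
  generalize hs : e p = s at h
  induction h generalizing p with
  | refl => exact ⟨p, hs.symm, .refl _⟩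
  | step ht _ ih =>
    subst hs
    obtain ⟨q, rfl, hq⟩ := he ht
    obtain ⟨r, rfl, hr⟩ := ih rfl
    exact ⟨r, rfl, .step hq hr⟩

def comapFilterMap (M : AsyncFSA C D) (g₁ : C' → Option C) (g₂ : D' → Option D) :
    AsyncFSA C' D' where
  Q := M.Q
  fin := M.fin
  init := M.init
  accept := M.accept
  trans p a b q := M.trans p (a.bind g₁) (b.bind g₂) q ∨
    (q = p ∧ a.bind g₁ = none ∧ b.bind g₂ = none)

section comapFilterMap

variable {M : AsyncFSA C D} {g₁ : C' → Option C} {g₂ : D' → Option D}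

theorem reaches_comapFilterMap_of_erased {q : M.Q} :
    ∀ (u : List C') (v : List D'), (∀ x ∈ u, g₁ x = none) → (∀ y ∈ v, g₂ y = none) →
      (M.comapFilterMap g₁ g₂).Reaches q u v q
  | [], [], _, _ => .refl _
  | [], y :: v, hu, hv => by
    simpa using Reaches.step (a := none) (b := some y)
      (Or.inr ⟨rfl, rfl, by simpa using hv y (by simp)⟩)
      (reaches_comapFilterMap_of_erased [] v hu fun z hz => hv z (by simp [hz]))
  | x :: u, v, hu, hv => by
    simpa using Reaches.step (a := some x) (b := none)
      (Or.inr ⟨rfl, by simpa using hu x (by simp), rfl⟩)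
      (reaches_comapFilterMap_of_erased u v (fun z hz => hu z (by simp [hz])) hv)

theorem Reaches.filterMap {p q : (M.comapFilterMap g₁ g₂).Q} {u : List C'} {v : List D'}
    (h : (M.comapFilterMap g₁ g₂).Reaches p u v q) :
    M.Reaches p (u.filterMap g₁) (v.filterMap g₂) q := by
  induction h with
  | refl => exact .refl _
  | step ht _ ih =>
    rcases ht with ht | ⟨rfl, h₁, h₂⟩
    · simpa [List.filterMap_append, Option.toList_bind_eq_filterMap] using Reaches.step ht ih
    · simpa [List.filterMap_append, ← Option.toList_bind_eq_filterMap, h₁, h₂] using ih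

theorem exists_eq_append_of_toList_append_eq_filterMap (g : C' → Option C) {a : Option C}
    {u : List C'} {l : List C} (h : a.toList ++ l = u.filterMap g) :
    ∃ (u₁ : List C') (a' : Option C') (u₂ : List C'), u = u₁ ++ a'.toList ++ u₂ ∧
      (∀ x ∈ u₁, g x = none) ∧ a'.bind g = a ∧ u₂.filterMap g = l := by
  cases a with
  | none => exact ⟨[], none, u, by simp, by simp, rfl, by simpa using h.symm⟩
  | some c =>
    obtain ⟨u₁, x, u₂, rfl, h₁, h₂, h₃⟩ := List.filterMap_eq_cons_iff.mp h.symm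
    exact ⟨u₁, some x, u₂, by simp, h₁, by simpa using h₂, h₃⟩

theorem Reaches.comapFilterMap {p q : M.Q} {u₀ : List C} {v₀ : List D}
    (h : M.Reaches p u₀ v₀ q) (u : List C') (v : List D')
    (hu : u₀ = u.filterMap g₁) (hv : v₀ = v.filterMap g₂) :
    (M.comapFilterMap g₁ g₂).Reaches p u v q := by
  induction h generalizing u v with
  | refl =>
    exact reaches_comapFilterMap_of_erased u v (List.filterMap_eq_nil_iff.mp hu.symm)
      (List.filterMap_eq_nil_iff.mp hv.symm)
  | step ht _ ih =>
    obtain ⟨u₁, a, u₂, rfl, hu₁, rfl, hu₂⟩ := exists_eq_append_of_toList_append_eq_filterMap g₁ hu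
    obtain ⟨v₁, b, v₂, rfl, hv₁, rfl, hv₂⟩ := exists_eq_append_of_toList_append_eq_filterMap g₂ hv
    simpa only [List.append_assoc] using (reaches_comapFilterMap_of_erased u₁ v₁ hu₁ hv₁).append
      (Reaches.step (Or.inl ht) (ih u₂ v₂ hu₂.symm hv₂.symm))

theorem accepts_comapFilterMap {u : List C'} {v : List D'} :
    (M.comapFilterMap g₁ g₂).Accepts u v ↔ M.Accepts (u.filterMap g₁) (v.filterMap g₂) :=
  ⟨fun ⟨q, hq, h⟩ => ⟨q, hq, h.filterMap⟩, fun ⟨q, hq, h⟩ => ⟨q, hq, h.comapFilterMap u v rfl rfl⟩⟩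

end comapFilterMap

def map (M : AsyncFSA C D) (f₁ : C → C') (f₂ : D → D') : AsyncFSA C' D' where
  Q := M.Q
  fin := M.fin
  init := M.init
  accept := M.accept
  trans p a b q := ∃ a₀ b₀, a = a₀.map f₁ ∧ b = b₀.map f₂ ∧ M.trans p a₀ b₀ q

section map

variable {M : AsyncFSA C D} {f₁ : C → C'} {f₂ : D → D'}

theorem Reaches.map {p q : M.Q} {u : List C} {v : List D} (h : M.Reaches p u v q) :
    (M.map f₁ f₂).Reaches p (u.map f₁) (v.map f₂) q := by
  induction h with
  | refl => exact .refl _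
  | step ht _ ih =>
    simpa [Option.toList_map] using Reaches.step (M := M.map f₁ f₂) ⟨_, _, rfl, rfl, ht⟩ ih

theorem Reaches.exists_of_map {p q : (M.map f₁ f₂).Q} {u : List C'} {v : List D'}
    (h : (M.map f₁ f₂).Reaches p u v q) :
    ∃ u₀ v₀, M.Reaches p u₀ v₀ q ∧ u = u₀.map f₁ ∧ v = v₀.map f₂ := by
  induction h with
  | refl => exact ⟨[], [], .refl _, rfl, rfl⟩
  | step ht _ ih =>
    obtain ⟨a₀, b₀, rfl, rfl, ht⟩ := ht
    obtain ⟨u₀, v₀, hr, rfl, rfl⟩ := ih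
    exact ⟨a₀.toList ++ u₀, b₀.toList ++ v₀, .step ht hr, by cases a₀ <;> simp,
      by cases b₀ <;> simp⟩

theorem accepts_map {u : List C'} {v : List D'} :
    (M.map f₁ f₂).Accepts u v ↔ ∃ u₀ v₀, M.Accepts u₀ v₀ ∧ u = u₀.map f₁ ∧ v = v₀.map f₂ := by
  constructor
  · rintro ⟨q, hq, h⟩
    obtain ⟨u₀, v₀, h₀, rfl, rfl⟩ := h.exists_of_map
    exact ⟨u₀, v₀, ⟨q, hq, h₀⟩, rfl, rfl⟩
  · rintro ⟨u₀, v₀, ⟨q, hq, h₀⟩, rfl, rfl⟩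
    exact ⟨q, hq, h₀.map⟩

end map

def union (M₁ M₂ : AsyncFSA C D) : AsyncFSA C D where
  Q := Option (M₁.Q ⊕ M₂.Q)
  fin := have := M₁.fin; have := M₂.fin; inferInstance
  init := none
  accept := {s | s.elim False (Sum.elim (· ∈ M₁.accept) (· ∈ M₂.accept))}
  trans s a b t := match s, t with
    | none, some (.inl q) => a = none ∧ b = none ∧ q = M₁.init
    | none, some (.inr q) => a = none ∧ b = none ∧ q = M₂.init
    | some (.inl p), some (.inl q) => M₁.trans p a b q
    | some (.inr p), some (.inr q) => M₂.trans p a b q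
    | _, _ => False

section union

variable {M₁ M₂ : AsyncFSA C D}

theorem Reaches.exists_of_union_inl {p : M₁.Q} {t : (M₁.union M₂).Q} {u : List C} {v : List D}
    (h : (M₁.union M₂).Reaches (some (.inl p)) u v t) :
    ∃ q, t = some (.inl q) ∧ M₁.Reaches p u v q := by
  refine Reaches.exists_of_lift (M := M₁) (N := M₁.union M₂)
    (fun q => (some (Sum.inl q) : Option (M₁.Q ⊕ M₂.Q))) (fun {_ _ _ t} ht => ?_) h
  rcases t with _ | q | q
  exacts [ht.elim, ⟨q, rfl, ht⟩, ht.elim]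

theorem Reaches.exists_of_union_inr {p : M₂.Q} {t : (M₁.union M₂).Q} {u : List C} {v : List D}
    (h : (M₁.union M₂).Reaches (some (.inr p)) u v t) :
    ∃ q, t = some (.inr q) ∧ M₂.Reaches p u v q := by
  refine Reaches.exists_of_lift (M := M₂) (N := M₁.union M₂)
    (fun q => (some (Sum.inr q) : Option (M₁.Q ⊕ M₂.Q))) (fun {_ _ _ t} ht => ?_) h
  rcases t with _ | q | q
  exacts [ht.elim, ht.elim, ⟨q, rfl, ht⟩]

theorem accepts_union {u : List C} {v : List D} :
    (M₁.union M₂).Accepts u v ↔ M₁.Accepts u v ∨ M₂.Accepts u v := by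
  constructor
  · rintro ⟨t, ht, h⟩
    cases h with
    | refl => exact ht.elim
    | @step _ s _ a b _ _ hs h =>
      rcases s with _ | q | q
      · exact hs.elim
      · obtain ⟨rfl, rfl, rfl⟩ := hs
        obtain ⟨q, rfl, h₁⟩ := h.exists_of_union_inl
        exact .inl ⟨q, ht, h₁⟩
      · obtain ⟨rfl, rfl, rfl⟩ := hs
        obtain ⟨q, rfl, h₂⟩ := h.exists_of_union_inr
        exact .inr ⟨q, ht, h₂⟩
  · rintro (⟨q, hq, h⟩ | ⟨q, hq, h⟩)
    · have h₀ : (M₁.union M₂).trans none none none (some (.inl M₁.init)) := ⟨rfl, rfl, rfl⟩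
      exact ⟨some (.inl q), hq, .step h₀ (h.lift (N := M₁.union M₂) (fun q => some (.inl q)) id)⟩
    · have h₀ : (M₁.union M₂).trans none none none (some (.inr M₂.init)) := ⟨rfl, rfl, rfl⟩
      exact ⟨some (.inr q), hq, .step h₀ (h.lift (N := M₁.union M₂) (fun q => some (.inr q)) id)⟩

end union

def prod {Q₁ Q₂ : Type} [Finite Q₁] [Finite Q₂] (M₁ : DFA C Q₁) (M₂ : DFA D Q₂) :
    AsyncFSA C D where
  Q := Q₁ × Q₂
  init := (M₁.start, M₂.start)
  accept := M₁.accept ×ˢ M₂.accept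
  trans s a b t := t = (a.elim s.1 (M₁.step s.1), b.elim s.2 (M₂.step s.2))

section prod

variable {Q₁ Q₂ : Type} [Finite Q₁] [Finite Q₂] {M₁ : DFA C Q₁} {M₂ : DFA D Q₂}

theorem Reaches.eq_evalFrom_prod {s t : (prod M₁ M₂).Q} {u : List C} {v : List D}
    (h : (prod M₁ M₂).Reaches s u v t) : t = (M₁.evalFrom s.1 u, M₂.evalFrom s.2 v) := by
  induction h with
  | refl => rfl
  | @step _ _ _ a b _ _ ht _ ih =>
    rw [ih, ht]
    cases a <;> cases b <;> rfl

theorem reaches_prod_evalFrom (s : Q₁ × Q₂) (u : List C) (v : List D) :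
    (prod M₁ M₂).Reaches s u v (M₁.evalFrom s.1 u, M₂.evalFrom s.2 v) := by
  induction u generalizing s with
  | nil =>
    induction v generalizing s with
    | nil => exact .refl _
    | cons y v ih => exact .step (a := none) (b := some y) rfl (ih (s.1, M₂.step s.2 y))
  | cons x u ih => exact .step (a := some x) (b := none) rfl (ih (M₁.step s.1 x, s.2))

theorem accepts_prod {u : List C} {v : List D} :
    (prod M₁ M₂).Accepts u v ↔ u ∈ M₁.accepts ∧ v ∈ M₂.accepts := by
  constructor
  · rintro ⟨t, ht, h⟩
    rw [h.eq_evalFrom_prod] at ht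
    exact ht
  · rintro ⟨h₁, h₂⟩
    exact ⟨_, ⟨(M₁.mem_accepts).1 h₁, (M₂.mem_accepts).1 h₂⟩, reaches_prod_evalFrom _ u v⟩

end prod

end AsyncFSA

section IsRationalRel

variable {C D C' D' : Type*}

theorem IsRationalRel.preimage_filterMap {R : Set (List C × List D)} (h : IsRationalRel R)
    (g₁ : C' → Option C) (g₂ : D' → Option D) :
    IsRationalRel (Prod.map (List.filterMap g₁) (List.filterMap g₂) ⁻¹' R) := by
  obtain ⟨M, hM⟩ := h
  exact ⟨M.comapFilterMap g₁ g₂, fun p => (hM _).trans AsyncFSA.accepts_comapFilterMap.symm⟩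

theorem IsRationalRel.preimage_map {R : Set (List C × List D)} (h : IsRationalRel R)
    (f₁ : C' → C) (f₂ : D' → D) :
    IsRationalRel (Prod.map (List.map f₁) (List.map f₂) ⁻¹' R) := by
  simpa only [List.filterMap_eq_map] using h.preimage_filterMap (some ∘ f₁) (some ∘ f₂)

theorem IsRationalRel.image_map {R : Set (List C × List D)} (h : IsRationalRel R)
    (f₁ : C → C') (f₂ : D → D') :
    IsRationalRel (Prod.map (List.map f₁) (List.map f₂) '' R) := by
  obtain ⟨M, hM⟩ := h
  exact ⟨M.map f₁ f₂, fun ⟨u, v⟩ => by simp [AsyncFSA.accepts_map, hM, eq_comm]⟩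

theorem IsRationalRel.union {R₁ R₂ : Set (List C × List D)} (h₁ : IsRationalRel R₁)
    (h₂ : IsRationalRel R₂) : IsRationalRel (R₁ ∪ R₂) := by
  obtain ⟨M₁, hM₁⟩ := h₁
  obtain ⟨M₂, hM₂⟩ := h₂
  exact ⟨M₁.union M₂, fun p => by rw [Set.mem_union, hM₁, hM₂, AsyncFSA.accepts_union]⟩

theorem IsRegularLang.isRationalRel_prod {L₁ : Set (List C)} {L₂ : Set (List D)}
    (h₁ : IsRegularLang L₁) (h₂ : IsRegularLang L₂) : IsRationalRel (L₁ ×ˢ L₂) := by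
  obtain ⟨Q₁, _, M₁, hM₁⟩ := h₁
  obtain ⟨Q₂, _, M₂, hM₂⟩ := h₂
  exact ⟨AsyncFSA.prod M₁ M₂, fun p => by rw [Set.mem_prod, hM₁, hM₂, AsyncFSA.accepts_prod]⟩

end IsRationalRel

section IsRegularLang

variable {α : Type*}

theorem isRegularLang_of_foldl {σ : Type} [Fintype σ] {L : Set (List α)} (step : σ → α → σ)
    (s₀ : σ) (F : Set σ) (h : ∀ w, w ∈ L ↔ w.foldl step s₀ ∈ F) : IsRegularLang L :=
  ⟨σ, inferInstance, ⟨step, s₀, F⟩, h⟩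

theorem isRegularLang_exists_mem (P : α → Prop) : IsRegularLang {w | ∃ x ∈ w, P x} := by
  have key : ∀ (w : List α) (s : Prop), w.foldl (fun s x => s ∨ P x) s ↔ s ∨ ∃ x ∈ w, P x := by
    intro w
    induction w with
    | nil => simp
    | cons x w ih => intro s; simp [ih, or_assoc]
  exact isRegularLang_of_foldl (fun s x => s ∨ P x) False {s | s} fun w => by simp [key]

theorem isRegularLang_ne_nil_forall_mem (P : α → Prop) :
    IsRegularLang {w | w ≠ [] ∧ ∀ x ∈ w, P x} := by
  have key : ∀ (w : List α) (s : Prop × Prop),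
      w.foldl (fun s x => (True, s.2 ∧ P x)) s = (s.1 ∨ w ≠ [], s.2 ∧ ∀ x ∈ w, P x) := by
    intro w
    induction w with
    | nil => simp
    | cons x w ih => intro s; simp [ih, and_assoc]
  exact isRegularLang_of_foldl (fun s x => (True, s.2 ∧ P x)) (False, True) {s | s.1 ∧ s.2}
    fun w => by simp [key]

end IsRegularLang

section evalWord

variable {α β S T : Type*} [Semigroup S] [Semigroup T]

theorem evalWord_cons (f : α → S) (a : α) (l : List α) :
    evalWord f (a :: l) = some ((evalWord f l).elim (f a) (f a * ·)) := by
  suffices ∀ s, l.foldl (fun t x => t * f x) s = (evalWord f l).elim s (s * ·) from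
    congrArg some (this (f a))
  induction l with
  | nil => simp [evalWord]
  | cons b l ih =>
    intro s
    rw [List.foldl_cons, ih, evalWord, ih]
    cases evalWord f l <;> simp [mul_assoc]

theorem evalWord_eq_none_iff {f : α → S} {l : List α} : evalWord f l = none ↔ l = [] := by
  cases l <;> simp [evalWord]

theorem evalWord_map (f : β → S) (h : α → β) (l : List α) :
    evalWord f (l.map h) = evalWord (f ∘ h) l := by
  cases l <;> simp [evalWord, List.foldl_map]

theorem evalWord_comp (φ : S →ₙ* T) (f : α → S) (l : List α) :
    evalWord (φ ∘ f) l = (evalWord f l).map φ := by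
  induction l with
  | nil => rfl
  | cons a l ih =>
    rw [evalWord_cons, evalWord_cons, ih]
    cases evalWord f l <;> simp

theorem evalWord_eq_some_prod {M : Type*} [Monoid M] (f : α → M) {l : List α} (hl : l ≠ []) :
    evalWord f l = some (l.map f).prod := by
  obtain ⟨a, l, rfl⟩ := List.exists_cons_of_ne_nil hl
  simp [evalWord, List.prod_eq_foldl, List.foldl_map]

theorem evalWord_eq_some_zero_iff {M : Type*} [SemigroupWithZero M] [NoZeroDivisors M]
    (f : α → M) {l : List α} :
    evalWord f l = some 0 ↔ ∃ x ∈ l, f x = 0 := by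
  induction l with
  | nil => simp [evalWord]
  | cons a l ih =>
    rw [evalWord_cons]
    rcases h : evalWord f l with _ | s
    · simp [evalWord_eq_none_iff.1 h]
    · simp [← ih, h]

theorem evalWord_eq_evalWord_iff {A : Set S} {l₁ l₂ : List A} :
    evalWord Subtype.val l₁ = evalWord Subtype.val l₂ ↔
      (l₁, l₂) ∈ SWP A ∨ (l₁ = [] ∧ l₂ = []) := by
  constructor
  · intro h
    by_cases h₁ : l₁ = []
    · exact .inr ⟨h₁, evalWord_eq_none_iff.1 (h.symm.trans (evalWord_eq_none_iff.2 h₁))⟩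
    · refine .inl ⟨h₁, fun h₂ => h₁ ?_, h⟩
      exact evalWord_eq_none_iff.1 (h.trans (evalWord_eq_none_iff.2 h₂))
  · rintro (⟨-, -, h⟩ | ⟨rfl, rfl⟩)
    exacts [h, rfl]

end evalWord

theorem List.prod_map_eq_prod_map_filterMap {α β M : Type*} [Monoid M] {F : α → M}
    {g : α → Option β} {G : β → M} (h : ∀ x, F x = (g x).elim 1 G) (l : List α) :
    (l.map F).prod = ((l.filterMap g).map G).prod := by
  induction l with
  | nil => rfl
  | cons x l ih => rcases hx : g x with _ | b <;> simp [h x, hx, ih]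

def WithZero.coeMulHom {S : Type*} [Mul S] : S →ₙ* WithZero S := ⟨(↑), WithZero.coe_mul⟩

section Semigroup

variable {S T : Type*} [Semigroup S] [Semigroup T]

theorem WithOne.prod_map_coe {α : Type*} (f : α → S) (l : List α) :
    (l.map fun a => (f a : WithOne S)).prod = (evalWord f l).elim 1 (↑) := by
  rcases eq_or_ne l [] with rfl | hl
  · rfl
  obtain ⟨s, hs⟩ := Option.ne_none_iff_exists'.1 ((evalWord_eq_none_iff (f := f)).not.2 hl)
  have h := evalWord_eq_some_prod (fun a => (f a : WithOne S)) hl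
  rw [show (fun a => (f a : WithOne S)) = WithOne.coeMulHom ∘ f from rfl, evalWord_comp, hs] at h
  rw [hs]
  exact (Option.some_injective _ h).symm

theorem Subsemigroup.closure_image_union_singleton_eq_top (φ : S →ₙ* T) {A : Set S}
    (hA : Subsemigroup.closure A = ⊤) {e : T} (hφ : ∀ x, x = e ∨ x ∈ Set.range φ) :
    Subsemigroup.closure (φ '' A ∪ {e}) = ⊤ := by
  refine eq_top_iff.2 fun x _ => ?_
  obtain rfl | ⟨s, rfl⟩ := hφ x
  · exact subset_closure (Or.inr rfl)
  · have hs : φ s ∈ (Subsemigroup.closure A).map φ := mem_map.2 ⟨s, hA ▸ mem_top s, rfl⟩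
    rw [MulHom.map_mclosure] at hs
    exact closure_mono Set.subset_union_left hs

theorem Subsemigroup.closure_preimage_eq_top {φ : S →ₙ* T} (hφ : Function.Injective φ)
    (hfac : ∀ x y s, x * y = φ s → (x ∈ Set.range φ ∧ y ∈ Set.range φ) ∨ x * y = x ∨ x * y = y)
    {B : Set T} (hB : Subsemigroup.closure B = ⊤) :
    Subsemigroup.closure (φ ⁻¹' B) = ⊤ := by
  suffices ∀ x ∈ Subsemigroup.closure B, ∀ s, x = φ s → s ∈ Subsemigroup.closure (φ ⁻¹' B) from
    eq_top_iff.2 fun s _ => this _ (hB ▸ mem_top _) s rfl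
  intro x hx
  induction hx using Subsemigroup.closure_induction with
  | mem x hx => rintro s rfl; exact subset_closure hx
  | mul x y _ _ ihx ihy =>
    intro s hs
    rcases hfac x y s hs with ⟨⟨a, rfl⟩, ⟨b, rfl⟩⟩ | hx | hy
    · obtain rfl : a * b = s := hφ ((map_mul φ a b).trans hs)
      exact mul_mem (ihx a rfl) (ihy b rfl)
    · exact ihx s (hx.symm.trans hs)
    · exact ihy s (hy.symm.trans hs)

theorem IsRationalRel.swp_preimage {φ : S →ₙ* T} (hφ : Function.Injective φ) {B : Set T}
    (hB : IsRationalRel (SWP B)) : IsRationalRel (SWP (φ ⁻¹' B)) := by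
  let f : φ ⁻¹' B → B := fun a => ⟨φ a, a.2⟩
  have hval (l : List (φ ⁻¹' B)) :
      evalWord Subtype.val (l.map f) = (evalWord Subtype.val l).map φ :=
    (evalWord_map _ f l).trans (evalWord_comp φ _ l)
  convert hB.preimage_map f f using 1
  ext ⟨u, v⟩
  simp only [SWP, Set.mem_ofPred_eq, Set.mem_preimage, Prod.map, ne_eq, List.map_eq_nil_iff, hval,
    (Option.map_injective hφ).eq_iff]

theorem IsRationalRel.swp_withOne {A : Set S} (hA : IsRationalRel (SWP A)) :
    IsRationalRel (SWP (WithOne.coeMulHom '' A ∪ {1})) := by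
  set B : Set (WithOne S) := WithOne.coeMulHom '' A ∪ {1}
  let ι : A → WithOne S := fun a => ((a : S) : WithOne S)
  have : ∀ x : B, ∃ o : Option A, (x : WithOne S) = o.elim 1 ι := by
    rintro ⟨_, ⟨s, hs, rfl⟩ | rfl⟩
    exacts [⟨some ⟨s, hs⟩, rfl⟩, ⟨none, rfl⟩]
  choose g hg using this
  have key (w : List B) (hw : w ≠ []) :
      evalWord Subtype.val w = some ((evalWord Subtype.val (w.filterMap g)).elim 1 (↑)) := by
    rw [evalWord_eq_some_prod _ hw, List.prod_map_eq_prod_map_filterMap hg, WithOne.prod_map_coe]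
  have hinj : Function.Injective fun o : Option S => o.elim (1 : WithOne S) (↑) := by
    rintro (_ | a) (_ | b) h
    exacts [rfl, (WithOne.coe_ne_one h.symm).elim, (WithOne.coe_ne_one h).elim,
      congrArg some (WithOne.coe_injective h)]
  have hswp : SWP B = Prod.map (List.filterMap g) (List.filterMap g) ⁻¹' SWP A ∪
      {w | w ≠ [] ∧ ∀ x ∈ w, g x = none} ×ˢ {w | w ≠ [] ∧ ∀ x ∈ w, g x = none} := by
    ext ⟨u, v⟩
    simp only [SWP, Set.mem_union, Set.mem_preimage, Prod.map, Set.mem_prod, Set.mem_ofPred_eq,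
      ← List.filterMap_eq_nil_iff]
    constructor
    · rintro ⟨hu, hv, he⟩
      rw [key u hu, key v hv, Option.some_inj, hinj.eq_iff, evalWord_eq_evalWord_iff] at he
      rcases he with h | ⟨h₁, h₂⟩
      exacts [.inl h, .inr ⟨⟨hu, h₁⟩, hv, h₂⟩]
    · rintro (⟨h₁, h₂, he⟩ | ⟨⟨hu, h₁⟩, hv, h₂⟩)
      · have hu : u ≠ [] := by rintro rfl; exact h₁ rfl
        have hv : v ≠ [] := by rintro rfl; exact h₂ rfl
        exact ⟨hu, hv, by rw [key u hu, key v hv, he]⟩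
      · exact ⟨hu, hv, by rw [key u hu, key v hv, h₁, h₂]⟩
  rw [hswp]
  exact (hA.preimage_filterMap g g).union
    ((isRegularLang_ne_nil_forall_mem _).isRationalRel_prod (isRegularLang_ne_nil_forall_mem _))

theorem IsRationalRel.swp_withZero {A : Set S} (hA : IsRationalRel (SWP A)) :
    IsRationalRel (SWP (WithZero.coeMulHom '' A ∪ {0})) := by
  set B : Set (WithZero S) := WithZero.coeMulHom '' A ∪ {0}
  let f : A → B := fun a => ⟨WithZero.coeMulHom a, .inl ⟨a, a.2, rfl⟩⟩
  have hf (x : B) (hx : (x : WithZero S) ≠ 0) : x ∈ Set.range f := by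
    obtain ⟨_, ⟨s, hs, rfl⟩ | rfl⟩ := x
    exacts [⟨⟨s, hs⟩, rfl⟩, (hx rfl).elim]
  have hval (l : List A) :
      evalWord Subtype.val (l.map f) = (evalWord Subtype.val l).map WithZero.coeMulHom :=
    (evalWord_map _ f l).trans (evalWord_comp (WithZero.coeMulHom : S →ₙ* WithZero S) _ l)
  have hinj : Function.Injective (Option.map (WithZero.coeMulHom : S →ₙ* WithZero S)) :=
    Option.map_injective WithZero.coe_injective
  let Z : Set (List B) := {w | ∃ x ∈ w, (x : WithZero S) = 0}
  have hZ (w : List B) : w ∈ Z ↔ evalWord Subtype.val w = some 0 :=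
    (evalWord_eq_some_zero_iff _).symm
  have hnZ (w : List B) (hw : w ∉ Z) : w ∈ Set.range (List.map f) := by
    rw [Set.range_list_map]
    exact fun x hx => hf x fun h => hw ⟨x, hx, h⟩
  have hswp : SWP B = Z ×ˢ Z ∪ Prod.map (List.map f) (List.map f) '' SWP A := by
    ext ⟨u, v⟩
    simp only [SWP, Set.mem_union, Set.mem_prod, Set.mem_image, Set.mem_ofPred_eq, Prod.exists,
      Prod.map, Prod.mk.injEq]
    constructor
    · rintro ⟨hu, hv, he⟩
      by_cases hu₀ : u ∈ Z
      · exact .inl ⟨hu₀, (hZ v).2 (he ▸ (hZ u).1 hu₀)⟩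
      have hv₀ : v ∉ Z := fun hv₀ => hu₀ ((hZ u).2 (he ▸ (hZ v).1 hv₀))
      obtain ⟨u, rfl⟩ := hnZ u hu₀
      obtain ⟨v, rfl⟩ := hnZ v hv₀
      rw [hval, hval, hinj.eq_iff] at he
      exact .inr ⟨u, v, ⟨by simpa using hu, by simpa using hv, he⟩, rfl, rfl⟩
    · rintro (⟨hu, hv⟩ | ⟨u, v, ⟨hu, hv, he⟩, rfl, rfl⟩)
      · exact ⟨List.ne_nil_of_mem hu.choose_spec.1, List.ne_nil_of_mem hv.choose_spec.1,
          ((hZ u).1 hu).trans ((hZ v).1 hv).symm⟩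
      · exact ⟨by simpa using hu, by simpa using hv, by rw [hval, hval, he]⟩
  rw [hswp]
  exact ((isRegularLang_exists_mem _).isRationalRel_prod (isRegularLang_exists_mem _)).union
    (hA.image_map f f)

theorem HasRationalWP.of_injective (φ : S →ₙ* T) (hφ : Function.Injective φ)
    (hfac : ∀ x y s, x * y = φ s → (x ∈ Set.range φ ∧ y ∈ Set.range φ) ∨ x * y = x ∨ x * y = y)
    (h : HasRationalWP T) : HasRationalWP S := by
  obtain ⟨B, hfin, hgen, hrat⟩ := h
  exact ⟨φ ⁻¹' B, hfin.preimage hφ.injOn, Subsemigroup.closure_preimage_eq_top hφ hfac hgen,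
    hrat.swp_preimage hφ⟩

theorem HasRationalWP.withOne (h : HasRationalWP S) : HasRationalWP (WithOne S) := by
  obtain ⟨A, hfin, hgen, hrat⟩ := h
  refine ⟨_, (hfin.image _).union (Set.finite_singleton 1),
    Subsemigroup.closure_image_union_singleton_eq_top _ hgen fun x => ?_, hrat.swp_withOne⟩
  exact (eq_or_ne x 1).imp_right WithOne.ne_one_iff_exists.1

theorem HasRationalWP.withZero (h : HasRationalWP S) : HasRationalWP (WithZero S) := by
  obtain ⟨A, hfin, hgen, hrat⟩ := h
  refine ⟨_, (hfin.image _).union (Set.finite_singleton 0),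
    Subsemigroup.closure_image_union_singleton_eq_top _ hgen fun x => ?_, hrat.swp_withZero⟩
  exact (eq_or_ne x 0).imp_right WithZero.ne_zero_iff_exists.1

theorem HasRationalWP.of_withOne (h : HasRationalWP (WithOne S)) : HasRationalWP S := by
  refine h.of_injective WithOne.coeMulHom WithOne.coe_injective fun x y s _ => ?_
  rcases eq_or_ne x 1 with rfl | hx
  · exact .inr (.inr (one_mul y))
  rcases eq_or_ne y 1 with rfl | hy
  · exact .inr (.inl (mul_one x))
  exact .inl ⟨WithOne.ne_one_iff_exists.1 hx, WithOne.ne_one_iff_exists.1 hy⟩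

theorem HasRationalWP.of_withZero (h : HasRationalWP (WithZero S)) : HasRationalWP S := by
  refine h.of_injective WithZero.coeMulHom WithZero.coe_injective fun x y s hs => .inl ?_
  have hxy : x * y ≠ 0 := hs ▸ WithZero.coe_ne_zero
  exact ⟨WithZero.ne_zero_iff_exists.1 (left_ne_zero_of_mul hxy),
    WithZero.ne_zero_iff_exists.1 (right_ne_zero_of_mul hxy)⟩

end Semigroup

theorem stmt_16_general {S : Type*} [Semigroup S] :
    (HasRationalWP S ↔ HasRationalWP (WithOne S)) ∧
    (HasRationalWP S ↔ HasRationalWP (WithZero S)) :=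
  ⟨⟨.withOne, .of_withOne⟩, ⟨.withZero, .of_withZero⟩⟩

/-- A finitely generated semigroup has rational word problem iff the semigroup
with an identity adjoined does, and iff the semigroup with a zero adjoined
does. -/
theorem stmt_16 {S : Type*} [Semigroup S]
    (hfg : ∃ A : Set S, A.Finite ∧ Subsemigroup.closure A = ⊤) :
    (HasRationalWP S ↔ HasRationalWP (WithOne S)) ∧
    (HasRationalWP S ↔ HasRationalWP (WithZero S)) :=
  stmt_16_general
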